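/- arXiv:2005.06290 — 6 statements merged into one kernel-verified Lean document; each statement's English description precedes it below -/
import Mathlib

section
/- For n ≥ 3 and 1 ≤ i ≤ n-2, the matrices V_i satisfy V_i V_{i+1} V_i − V_{i+1} V_i V_{i+1} = (xy−1)(V_i − V_{i+1}). -/
open Matrix Polynomial

/-- Deformed Tits matrix `V_i` (generator index `i` is 1-based, `1 ≤ i ≤ m`):
the identity `m × m` matrix except column `i`, which has `-1` on the diagonal,
`y` in row `i-1` and `x` in row `i+1`. -/
def Vmat {R : Type*} [CommRing R] (x y : R) (m i : ℕ) : Matrix (Fin m) (Fin m) R :=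
  Matrix.of fun r c =>
    if (c : ℕ) + 1 = i then
      if (r : ℕ) + 1 = i then -1
      else if (r : ℕ) + 2 = i then y
      else if (r : ℕ) = i then x
      else 0
    else if r = c then 1 else 0

/-- The ring `ℤ[x,y]`. -/
noncomputable abbrev Lam : Type := MvPolynomial (Fin 2) ℤ

/-- The variable `x` of `ℤ[x,y]`. -/
noncomputable def xP : Lam := MvPolynomial.X 0

/-- The variable `y` of `ℤ[x,y]`. -/
noncomputable def yP : Lam := MvPolynomial.X 1

lemma vmv_mul {R : Type*} [CommRing R] {m : ℕ} (u v w z : Fin m → R) :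
    vecMulVec u v * vecMulVec w z = (v ⬝ᵥ w) • vecMulVec u z := by
  ext r c
  simp only [Matrix.mul_apply, vecMulVec_apply, Matrix.smul_apply, dotProduct, smul_eq_mul,
    Finset.sum_mul]
  exact Finset.sum_congr rfl fun k _ => by ring

lemma braid_aux {R : Type*} [CommRing R] {m : ℕ} (x y : R)
    (A B : Matrix (Fin m) (Fin m) R)
    (hAA : A*A = (-2 : R) • A) (hBB : B*B = (-2 : R) • B)
    (hABA : A*B*A = (x*y) • A) (hBAB : B*A*B = (x*y) • B) :
    (1+A)*(1+B)*(1+A) - (1+B)*(1+A)*(1+B) = (x*y-1) • (A-B) := by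
  have e1 : (1+A)*(1+B)*(1+A) = 1 + A + A + B + A*B + B*A + A*A + A*B*A := by noncomm_ring
  have e2 : (1+B)*(1+A)*(1+B) = 1 + B + B + A + A*B + B*A + B*B + B*A*B := by noncomm_ring
  rw [e1, e2, hAA, hBB, hABA, hBAB]
  module

lemma Vmat_decomp {R : Type*} [CommRing R] (x y : R) (m i : ℕ) :
    Vmat x y m i = 1 + vecMulVec
      (fun r : Fin m => if (r:ℕ)+2 = i then y else if (r:ℕ)+1 = i then -2
        else if (r:ℕ) = i then x else 0)
      (fun c : Fin m => if (c:ℕ)+1 = i then 1 else 0) := by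
  ext r c
  simp only [Vmat, of_apply, Matrix.add_apply, Matrix.one_apply, vecMulVec_apply, Fin.ext_iff]
  split_ifs <;> first | ring1 | omega

lemma ind_dot {R : Type*} [CommRing R] {m : ℕ} (f g : Fin m → R) (j : ℕ) (hj : j < m)
    (hg : ∀ c : Fin m, g c = if (c:ℕ) = j then 1 else 0) : g ⬝ᵥ f = f ⟨j, hj⟩ := by
  simp only [dotProduct, hg]
  rw [Finset.sum_eq_single (⟨j, hj⟩ : Fin m)]
  · simp
  · intro c _ hc
    rw [if_neg (by simpa [Fin.ext_iff] using hc), zero_mul]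
  · intro h; exact absurd (Finset.mem_univ _) h

/-- Lemma 3.1: for `n ≥ 3` and `1 ≤ i ≤ n-2`,
`V_i V_{i+1} V_i − V_{i+1} V_i V_{i+1} = (xy−1)(V_i − V_{i+1})` over `ℤ[x,y]`. -/
theorem stmt0 (n i : ℕ) (hn : 3 ≤ n) (hi1 : 1 ≤ i) (hi2 : i ≤ n - 2) :
    Vmat xP yP (n-1) i * Vmat xP yP (n-1) (i+1) * Vmat xP yP (n-1) i -
      Vmat xP yP (n-1) (i+1) * Vmat xP yP (n-1) i * Vmat xP yP (n-1) (i+1) =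
    (xP * yP - 1) • (Vmat xP yP (n-1) i - Vmat xP yP (n-1) (i+1)) := by
  set m := n - 1 with hm
  have him : i < m := by omega
  have him' : i - 1 < m := by omega
  set u : Fin m → Lam := fun r => if (r:ℕ)+2 = i then yP else if (r:ℕ)+1 = i then -2
    else if (r:ℕ) = i then xP else 0 with hu
  set v : Fin m → Lam := fun r => if (r:ℕ)+2 = i+1 then yP else if (r:ℕ)+1 = i+1 then -2
    else if (r:ℕ) = i+1 then xP else 0 with hv
  set a : Fin m → Lam := fun c => if (c:ℕ)+1 = i then 1 else 0 with ha
  set b : Fin m → Lam := fun c => if (c:ℕ)+1 = i+1 then 1 else 0 with hb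
  have hA : Vmat xP yP m i = 1 + vecMulVec u a := Vmat_decomp xP yP m i
  have hB : Vmat xP yP m (i+1) = 1 + vecMulVec v b := Vmat_decomp xP yP m (i+1)
  have hga : ∀ c : Fin m, a c = if (c:ℕ) = i-1 then 1 else 0 := by
    intro c; rw [ha]; exact if_congr (by omega) rfl rfl
  have hgb : ∀ c : Fin m, b c = if (c:ℕ) = i then 1 else 0 := by
    intro c; rw [hb]; exact if_congr (by omega) rfl rfl
  have dau : a ⬝ᵥ u = -2 := by
    rw [ind_dot u a (i-1) him' hga]
    show (if (i-1)+2 = i then yP else if (i-1)+1 = i then -2 else if (i-1) = i then xP else 0) = -2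
    rw [if_neg (by omega), if_pos (by omega)]
  have dav : a ⬝ᵥ v = yP := by
    rw [ind_dot v a (i-1) him' hga]
    show (if (i-1)+2 = i+1 then yP else if (i-1)+1 = i+1 then -2 else if (i-1) = i+1 then xP else 0) = yP
    rw [if_pos (by omega)]
  have dbu : b ⬝ᵥ u = xP := by
    rw [ind_dot u b i him hgb]
    show (if i+2 = i then yP else if i+1 = i then -2 else if i = i then xP else 0) = xP
    rw [if_neg (by omega), if_neg (by omega), if_pos rfl]
  have dbv : b ⬝ᵥ v = -2 := by
    rw [ind_dot v b i him hgb]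
    show (if i+2 = i+1 then yP else if i+1 = i+1 then -2 else if i = i+1 then xP else 0) = -2
    rw [if_neg (by omega), if_pos rfl]
  rw [hA, hB]
  have hsub : (1 + vecMulVec u a) - (1 + vecMulVec v b) = vecMulVec u a - vecMulVec v b := by
    abel
  rw [hsub]
  refine braid_aux xP yP _ _ ?_ ?_ ?_ ?_
  · rw [vmv_mul, dau]
  · rw [vmv_mul, dbv]
  · rw [vmv_mul, dav, smul_mul_assoc, vmv_mul, dbu, smul_smul, mul_comm]
  · rw [vmv_mul, dbu, smul_mul_assoc, vmv_mul, dav, smul_smul, mul_comm]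
end

section
/- For each n ≥ 2, the assignment t_i ↦ V_i extends to a group homomorphism ψ_n from the twin group T_n to GL_{n−1}(ℤ[x,y]); equivalently, V_i² = I for all i, and V_i V_j = V_j V_i whenever |i−j| > 1. -/
open Matrix Polynomial

/-- Relators of the twin group with `m` generators (the twin group on `m+1` strands). -/
def twinRels (m : ℕ) : Set (FreeGroup (Fin m)) :=
  {r | (∃ i, r = FreeGroup.of i * FreeGroup.of i) ∨
       (∃ i j : Fin m, (i : ℕ) + 1 < (j : ℕ) ∧
          r = FreeGroup.of i * FreeGroup.of j * (FreeGroup.of i)⁻¹ * (FreeGroup.of j)⁻¹)}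

/-- The twin group `T_{m+1}` on `m+1` strands, with `m` generators `t_1, …, t_m`;
the generator `t_{i+1}` is `TwinGroup.of i` for `i : Fin m`. -/
def TwinGroup (m : ℕ) : Type := PresentedGroup (twinRels m)

instance (m : ℕ) : Group (TwinGroup m) :=
  inferInstanceAs (Group (PresentedGroup (twinRels m)))

/-- The generator `t_{i+1}` of the twin group. -/
def TwinGroup.of {m : ℕ} (i : Fin m) : TwinGroup m := PresentedGroup.of i

/-!
Each `V_i` is a rank-one perturbation `1 + w_i e_iᵀ` of the identity, where `e_i` selects
column `i` and `w_i = V_i e_i - e_i` is supported on rows `i-1, i, i+1`. For such matrices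
`(1 + w eᵀ)² = 1 + (2 + eᵀw) w eᵀ`, and `e_iᵀ w_i = -2`; two of them commute as soon as
`e_iᵀ w_j = e_jᵀ w_i = 0`, which holds when `|i - j| > 1`. The twin group relations follow,
so the `V_i` define a homomorphism from the presented group.
-/

section RankOne

variable {n R : Type*} [Fintype n] [DecidableEq n] [CommRing R]

theorem one_add_vecMulVec_mul_self {u v : n → R} (h : v ⬝ᵥ u = -2) :
    (1 + vecMulVec u v) * (1 + vecMulVec u v) = 1 := by
  rw [add_mul, mul_add, mul_add, vecMulVec_mul_vecMulVec, vecMulVec_smul, h]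
  simp only [one_mul, mul_one, neg_smul, two_smul, neg_add]
  abel

theorem commute_one_add_vecMulVec {u v u' v' : n → R} (h : v ⬝ᵥ u' = 0) (h' : v' ⬝ᵥ u = 0) :
    Commute (1 + vecMulVec u v) (1 + vecMulVec u' v') := by
  simp only [Commute, SemiconjBy, add_mul, mul_add, vecMulVec_mul_vecMulVec, h, h', zero_smul,
    vecMulVec_zero, one_mul, mul_one, add_zero]
  abel

end RankOne

section Vmat

variable {R : Type*} [CommRing R]

def VmatCol (x y : R) (m i : ℕ) : Fin m → R := fun r =>
  if (r : ℕ) + 1 = i then -2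
  else if (r : ℕ) + 2 = i then y
  else if (r : ℕ) = i then x
  else 0

def VmatRow (m i : ℕ) : Fin m → R := fun c => if (c : ℕ) + 1 = i then 1 else 0

theorem Vmat_eq_one_add_vecMulVec (x y : R) (m i : ℕ) :
    Vmat x y m i = 1 + vecMulVec (VmatCol x y m i) (VmatRow m i) := by
  ext r c
  simp only [Vmat, of_apply, Matrix.add_apply, one_apply, vecMulVec_apply, VmatCol, VmatRow, Fin.ext_iff]
  split_ifs <;> first | (exfalso; omega) | ring

theorem VmatRow_dotProduct_VmatCol_self (x y : R) {m i : ℕ} (h1 : 1 ≤ i) (h2 : i ≤ m) :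
    VmatRow m i ⬝ᵥ VmatCol x y m i = -2 := by
  rw [dotProduct, Finset.sum_eq_single_of_mem (⟨i - 1, by omega⟩ : Fin m) (Finset.mem_univ _)]
  · simp [VmatRow, VmatCol, show i - 1 + 1 = i by omega]
  · intro c _ hc
    have : (c : ℕ) + 1 ≠ i := fun h => hc (Fin.ext (by simp only; omega))
    simp [VmatRow, this]

theorem VmatRow_dotProduct_VmatCol_of_ne (x y : R) (m : ℕ) {i j : ℕ}
    (h : i ≠ j) (h1 : i + 1 ≠ j) (h2 : i ≠ j + 1) :
    VmatRow m i ⬝ᵥ VmatCol x y m j = 0 := by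
  refine Finset.sum_eq_zero fun c _ => ?_
  simp only [VmatRow, VmatCol]
  split_ifs <;> first | (exfalso; omega) | ring

theorem Vmat_mul_self (x y : R) {m i : ℕ} (h1 : 1 ≤ i) (h2 : i ≤ m) :
    Vmat x y m i * Vmat x y m i = 1 := by
  rw [Vmat_eq_one_add_vecMulVec]
  exact one_add_vecMulVec_mul_self (VmatRow_dotProduct_VmatCol_self x y h1 h2)

theorem Vmat_commute (x y : R) (m : ℕ) {i j : ℕ} (h : i + 1 < j) :
    Commute (Vmat x y m i) (Vmat x y m j) := by
  rw [Vmat_eq_one_add_vecMulVec, Vmat_eq_one_add_vecMulVec]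
  exact commute_one_add_vecMulVec (VmatRow_dotProduct_VmatCol_of_ne x y m (by omega) (by omega)
    (by omega)) (VmatRow_dotProduct_VmatCol_of_ne x y m (by omega) (by omega) (by omega))

def VmatUnit (x y : R) (m : ℕ) (i : Fin m) : GL (Fin m) R :=
  ⟨Vmat x y m (i + 1), Vmat x y m (i + 1), Vmat_mul_self x y (by omega) (by omega),
    Vmat_mul_self x y (by omega) (by omega)⟩

theorem VmatUnit_mul_self (x y : R) (m : ℕ) (i : Fin m) :
    VmatUnit x y m i * VmatUnit x y m i = 1 :=
  Units.ext (Vmat_mul_self x y (by omega) (by omega))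

theorem VmatUnit_commute (x y : R) {m : ℕ} {i j : Fin m} (h : (i : ℕ) + 1 < (j : ℕ)) :
    Commute (VmatUnit x y m i) (VmatUnit x y m j) :=
  Units.ext (Vmat_commute x y m (by omega)).eq

end Vmat

namespace TwinGroup

variable {m : ℕ} {G : Type*} [Group G]

def lift (g : Fin m → G) (hsq : ∀ i, g i * g i = 1)
    (hcomm : ∀ i j : Fin m, (i : ℕ) + 1 < (j : ℕ) → Commute (g i) (g j)) : TwinGroup m →* G :=
  PresentedGroup.toGroup (rels := twinRels m) (f := g) <| by
    rintro r (⟨i, rfl⟩ | ⟨i, j, hij, rfl⟩)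
    · simpa using hsq i
    · simp [(hcomm i j hij).eq]

theorem lift_of (g : Fin m → G) (hsq : ∀ i, g i * g i = 1)
    (hcomm : ∀ i j : Fin m, (i : ℕ) + 1 < (j : ℕ) → Commute (g i) (g j)) (i : Fin m) :
    lift g hsq hcomm (of i) = g i :=
  PresentedGroup.toGroup.of _

end TwinGroup

theorem stmt1_general (n : ℕ) :
    (∃ ψ : TwinGroup (n-1) →* GL (Fin (n-1)) Lam,
        ∀ i : Fin (n-1), (ψ (TwinGroup.of i) : Matrix (Fin (n-1)) (Fin (n-1)) Lam)
          = Vmat xP yP (n-1) ((i : ℕ) + 1)) ∧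
    (∀ i : ℕ, 1 ≤ i → i ≤ n - 1 →
        Vmat xP yP (n-1) i * Vmat xP yP (n-1) i = 1) ∧
    (∀ i j : ℕ, 1 ≤ i → i + 1 < j → j ≤ n - 1 →
        Vmat xP yP (n-1) i * Vmat xP yP (n-1) j
          = Vmat xP yP (n-1) j * Vmat xP yP (n-1) i) := by
  refine ⟨⟨TwinGroup.lift (VmatUnit xP yP (n - 1)) (VmatUnit_mul_self xP yP (n - 1))
      (fun _ _ => VmatUnit_commute xP yP), fun i => ?_⟩,
    fun _ h1 h2 => Vmat_mul_self xP yP h1 h2,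
    fun _ _ _ hij _ => (Vmat_commute xP yP (n - 1) hij).eq⟩
  rw [TwinGroup.lift_of]
  rfl

/-- Proposition 3.2: for `n ≥ 2` the assignment `t_i ↦ V_i` extends to a group
homomorphism `ψ_n : T_n → GL_{n-1}(ℤ[x,y])`; equivalently, `V_i² = I` and
`V_i V_j = V_j V_i` for `|i-j| > 1`. -/
theorem stmt1 (n : ℕ) (hn : 2 ≤ n) :
    (∃ ψ : TwinGroup (n-1) →* GL (Fin (n-1)) Lam,
        ∀ i : Fin (n-1), (ψ (TwinGroup.of i) : Matrix (Fin (n-1)) (Fin (n-1)) Lam)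
          = Vmat xP yP (n-1) ((i : ℕ) + 1)) ∧
    (∀ i : ℕ, 1 ≤ i → i ≤ n - 1 →
        Vmat xP yP (n-1) i * Vmat xP yP (n-1) i = 1) ∧
    (∀ i j : ℕ, 1 ≤ i → i + 1 < j → j ≤ n - 1 →
        Vmat xP yP (n-1) i * Vmat xP yP (n-1) j
          = Vmat xP yP (n-1) j * Vmat xP yP (n-1) i) :=
  stmt1_general n
end

section
/- For any β in T_n and any n ≥ 2, the row vector F^R = (U_0(1/x), U_1(1/x), ..., U_{n−1}(1/x)) of length n satisfies F^R · ψ_{n+1}(ι^R(β)) = F^R, where ι^R : T_n → T_{n+1} is the inclusion t_i ↦ t_i; and similarly F^L = (U_{n−1}(1/x), ..., U_1(1/x), U_0(1/x)) satisfies F^L · ψ_{n+1}(ι^L(β)) = F^L, where ι^L(t_i) = t_{i+1}. -/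
open Matrix Polynomial

/-- The field `ℤ(x)` of rational functions over `ℤ`. -/
noncomputable abbrev Zx : Type := FractionRing (Polynomial ℤ)

/-- The element `x` of `ℤ(x)`. -/
noncomputable def xx : Zx := algebraMap (Polynomial ℤ) Zx Polynomial.X

/-- `U_n(1/x)` as an element of `ℤ(x)`, `U_n` the `n`-th Chebyshev polynomial
of the second kind. -/
noncomputable def Ux (n : ℕ) : Zx := Polynomial.eval xx⁻¹ (Polynomial.Chebyshev.U Zx n)

/-! Each generator `V_i` changes only the `i`-th coordinate of a row vector `v`, replacing it by
`x v_{i-1} + x v_{i+1} - v_i` (neighbours outside the range dropped). For `v_j = U_j(1/x)` this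
is `v_i` again by the recurrence `U_{j-1}(z) + U_{j+1}(z) = 2z U_j(z)`: at the lower end the
missing neighbour is `U_{-1} = 0`, and the upper end is not touched by generators in the image
of `ι^R`. Reversing the vector exchanges the two ends, which handles `ι^L`. The vectors fixed by
`ψ` form a subgroup, so it suffices to check generators. -/

open Polynomial.Chebyshev

theorem Polynomial.Chebyshev.mul_eval_inv_U_sub_one_add_mul_eval_inv_U_add_one {K : Type*}
    [Field K] {x : K} (hx : x ≠ 0) (t : ℤ) :
    x * (U K (t - 1)).eval x⁻¹ + x * (U K (t + 1)).eval x⁻¹ = 2 * (U K t).eval x⁻¹ := by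
  rw [U_add_one]
  simp only [eval_sub, eval_mul, eval_ofNat, eval_X]
  field_simp
  ring

theorem vecMul_eq_self_of_closure_range_eq_top {G ι n R : Type*} [Group G] [Fintype n]
    [DecidableEq n] [CommRing R] {f : ι → G} (hf : Subgroup.closure (Set.range f) = ⊤)
    (ρ : G →* Matrix n n R) {v : n → R} (hv : ∀ i, v ᵥ* ρ (f i) = v) (g : G) :
    v ᵥ* ρ g = v := by
  have hg : g ∈ Subgroup.closure (Set.range f) := hf ▸ Subgroup.mem_top g
  induction hg using Subgroup.closure_induction with
  | mem _ h => obtain ⟨i, rfl⟩ := h; exact hv i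
  | one => simp
  | mul a b _ _ ha hb => rw [map_mul, ← vecMul_vecMul, ha, hb]
  | inv a _ ha =>
    calc v ᵥ* ρ a⁻¹ = (v ᵥ* ρ a) ᵥ* ρ a⁻¹ := by rw [ha]
      _ = v := by rw [vecMul_vecMul, ← map_mul, mul_inv_cancel, map_one, vecMul_one]

theorem TwinGroup.closure_range_of (m : ℕ) :
    Subgroup.closure (Set.range (TwinGroup.of : Fin m → TwinGroup m)) = ⊤ :=
  PresentedGroup.closure_range_of (twinRels m)

/-- `W` extends the vector to all of `ℤ`; the boundary hypotheses say that a neighbour of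
coordinate `k` lying outside `Fin n`, which the truncated matrix ignores, vanishes. -/
theorem vecMul_Vmat_eq_self {R : Type*} [CommRing R] {x y : R} {n : ℕ} (W : ℤ → R) (k : ℕ)
    (h_bot : k = 0 → W (-1) = 0) (h_top : k + 1 = n → W (k + 1) = 0)
    (hW : y * W (k - 1) + x * W (k + 1) = 2 * W k) :
    (fun j : Fin n => W j) ᵥ* Vmat x y n (k + 1) = fun j : Fin n => W j := by
  funext c
  simp only [vecMul, dotProduct, Vmat, of_apply]
  by_cases hc : (c : ℕ) = k
  swap
  · simp [hc]
  have hk : k < n := hc ▸ c.2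
  have hsplit : ∀ r : ℕ, W r * (if r + 1 = k + 1 then -1 else if r + 2 = k + 1 then y
      else if r = k + 1 then x else 0) =
      (if r = k then -W r else 0) + (if r + 1 = k then y * W r else 0) +
        (if r = k + 1 then x * W r else 0) := by
    intro r
    split_ifs <;> first | omega | ring
  simp only [hc, if_true]
  rw [Fin.sum_univ_eq_sum_range (fun r : ℕ => W r * (if r + 1 = k + 1 then -1
      else if r + 2 = k + 1 then y else if r = k + 1 then x else 0)),
    Finset.sum_congr rfl fun r _ => hsplit r, Finset.sum_add_distrib, Finset.sum_add_distrib,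
    Finset.sum_ite_eq', Finset.sum_ite_eq']
  have h_below : ∑ r ∈ Finset.range n, (if r + 1 = k then y * W r else 0) = y * W (k - 1) := by
    rcases k with _ | j
    · simp [h_bot]
    · simp only [Nat.add_right_cancel_iff, Finset.sum_ite_eq', Finset.mem_range]
      rw [if_pos (by omega)]
      push_cast
      ring_nf
  have h_above : (if k + 1 ∈ Finset.range n then x * W (k + 1 : ℕ) else 0) = x * W (k + 1) := by
    split_ifs with h
    · push_cast; rfl
    · rw [Finset.mem_range] at h
      rw [h_top (by omega), mul_zero]
  rw [if_pos (Finset.mem_range.2 hk), h_below, h_above]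
  linear_combination hW

theorem xx_ne_zero : xx ≠ 0 := by
  rw [xx, Ne, IsFractionRing.to_map_eq_zero_iff]
  exact X_ne_zero

theorem vecMul_Vmat_Ux {n k : ℕ} (hk : k + 1 ≠ n) :
    (fun j : Fin n => Ux j) ᵥ* Vmat xx xx n (k + 1) = fun j : Fin n => Ux j :=
  vecMul_Vmat_eq_self (fun t => (U Zx t).eval xx⁻¹) k (fun _ => by simp)
    (fun h => absurd h hk) (mul_eval_inv_U_sub_one_add_mul_eval_inv_U_add_one xx_ne_zero k)

theorem vecMul_Vmat_Ux_rev {m k : ℕ} (hk : k ≠ 0) :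
    (fun j : Fin (m + 1) => Ux (m - j)) ᵥ* Vmat xx xx (m + 1) (k + 1) =
      fun j : Fin (m + 1) => Ux (m - j) := by
  have h_cast : (fun j : Fin (m + 1) => Ux (m - j)) =
      fun j : Fin (m + 1) => (U Zx (m - (j : ℤ))).eval xx⁻¹ := by
    funext j
    simp [Ux, Nat.cast_sub j.is_le]
  rw [h_cast]
  refine vecMul_Vmat_eq_self (fun t => (U Zx (m - t)).eval xx⁻¹) k (fun h => absurd h hk)
    (fun h => ?_) ?_
  · simp [show (k : ℤ) = m by omega]
  · have h := mul_eval_inv_U_sub_one_add_mul_eval_inv_U_add_one xx_ne_zero (m - k : ℤ)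
    rw [show (m : ℤ) - k - 1 = m - (k + 1) by ring,
      show (m : ℤ) - k + 1 = m - (k - 1) by ring] at h
    linear_combination h

theorem stmt4_general (m : ℕ)
    (ψ : TwinGroup (m+1) →* Matrix (Fin (m+1)) (Fin (m+1)) Zx)
    (hψ : ∀ i : Fin (m+1), ψ (TwinGroup.of i) = Vmat xx xx (m+1) ((i : ℕ) + 1))
    (ιR ιL : TwinGroup m →* TwinGroup (m+1))
    (hιR : ∀ i : Fin m, ιR (TwinGroup.of i) = TwinGroup.of i.castSucc)
    (hιL : ∀ i : Fin m, ιL (TwinGroup.of i) = TwinGroup.of i.succ)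
    (β : TwinGroup m) :
    (fun j : Fin (m+1) => Ux j) ᵥ* ψ (ιR β) = (fun j : Fin (m+1) => Ux j) ∧
    (fun j : Fin (m+1) => Ux (m - j)) ᵥ* ψ (ιL β) = (fun j : Fin (m+1) => Ux (m - j)) := by
  constructor
  · refine vecMul_eq_self_of_closure_range_eq_top (TwinGroup.closure_range_of m) (ψ.comp ιR)
      (fun i => ?_) β
    rw [MonoidHom.comp_apply, hιR, hψ, Fin.val_castSucc]
    exact vecMul_Vmat_Ux (by omega)
  · refine vecMul_eq_self_of_closure_range_eq_top (TwinGroup.closure_range_of m) (ψ.comp ιL)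
      (fun i => ?_) β
    rw [MonoidHom.comp_apply, hιL, hψ, Fin.val_succ]
    exact vecMul_Vmat_Ux_rev (by omega)

/-- Proposition 3.5: for `β ∈ T_n` (`n = m+1 ≥ 2`), the row vectors
`F^R = (U_0(1/x), …, U_{n-1}(1/x))` and `F^L = (U_{n-1}(1/x), …, U_0(1/x))`
satisfy `F^R ψ_{n+1}(ι^R β) = F^R` and `F^L ψ_{n+1}(ι^L β) = F^L`. -/
theorem stmt4 (m : ℕ) (hm : 1 ≤ m)
    (ψ : TwinGroup (m+1) →* Matrix (Fin (m+1)) (Fin (m+1)) Zx)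
    (hψ : ∀ i : Fin (m+1), ψ (TwinGroup.of i) = Vmat xx xx (m+1) ((i : ℕ) + 1))
    (ιR ιL : TwinGroup m →* TwinGroup (m+1))
    (hιR : ∀ i : Fin m, ιR (TwinGroup.of i) = TwinGroup.of i.castSucc)
    (hιL : ∀ i : Fin m, ιL (TwinGroup.of i) = TwinGroup.of i.succ)
    (β : TwinGroup m) :
    (fun j : Fin (m+1) => Ux j) ᵥ* ψ (ιR β) = (fun j : Fin (m+1) => Ux j) ∧
    (fun j : Fin (m+1) => Ux (m - j)) ᵥ* ψ (ιL β) = (fun j : Fin (m+1) => Ux (m - j)) :=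
  stmt4_general m ψ hψ ιR ιL hιR hιL β
end

section
/- Define P_n(x) = det(ψ_{n+1}(t_1 t_2 ⋯ t_n) − I_n) for n ≥ 1 and P_0(x) = 1. Then for n ≥ 2, P_n(x) = −2 P_{n−1}(x) − x² P_{n−2}(x). -/
/-!
Writing out the product `Q = V_1 ⋯ V_n` (with `y = x`) entry by entry, `Q - 1` factors as
`T * U`, where `U` is upper unitriangular with entries `x ^ (c - r)` above the diagonal and `T` is
the tridiagonal matrix with `-2` on the diagonal and `x` next to it. Hence `P_n = det T_n`, and
expanding `det T_n` along its first row gives the three-term recurrence.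
-/

open Matrix Polynomial

/-- The matrix `ψ_{n+1}(t_1 t_2 ⋯ t_n)`, the (ordered) product `V_1 V_2 ⋯ V_n`
of the deformed Tits matrices with `y = x`, over `ℤ[x]`. -/
noncomputable def psiWord (n : ℕ) : Matrix (Fin n) (Fin n) (Polynomial ℤ) :=
  (List.ofFn fun i : Fin n => Vmat (Polynomial.X : Polynomial ℤ) Polynomial.X n ((i : ℕ) + 1)).prod

/-- `P_n(x) = det(ψ_{n+1}(t_1 ⋯ t_n) − I_n)` for `n ≥ 1`, and `P_0 = 1`. -/
noncomputable def Ppoly : ℕ → Polynomial ℤ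
  | 0 => 1
  | (n+1) => Matrix.det (psiWord (n+1) - 1)

open Finset

section

variable {R : Type*} [CommRing R]

def tridiag (n : ℕ) (a b c : R) : Matrix (Fin n) (Fin n) R :=
  of fun i j =>
    if (i : ℕ) = j then a else if (i : ℕ) + 1 = j then b else if (j : ℕ) + 1 = i then c else 0

theorem tridiag_submatrix_succ (a b c : R) (m : ℕ) :
    (tridiag (m + 1) a b c).submatrix Fin.succ Fin.succ = tridiag m a b c := by
  ext i j
  simp [tridiag]

theorem det_tridiag_succ_succ (a b c : R) (m : ℕ) :
    (tridiag (m + 2) a b c).det =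
      a * (tridiag (m + 1) a b c).det - b * c * (tridiag m a b c).det := by
  set T := tridiag (m + 2) a b c
  have hminor : (T.submatrix Fin.succ (Fin.succAbove 1)).det = c * (tridiag m a b c).det := by
    have hsub : (T.submatrix Fin.succ (Fin.succAbove 1)).submatrix (Fin.succAbove 0) Fin.succ =
        tridiag m a b c := by
      ext i j
      simp [T, tridiag]
    rw [det_succ_column_zero, Fin.sum_univ_succ, Fintype.sum_eq_zero _ fun i => ?_, hsub] <;>
      simp [T, tridiag]
  rw [det_succ_row_zero, Fin.sum_univ_succ, Fin.sum_univ_succ,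
    Fintype.sum_eq_zero _ fun j => ?_, Fin.succAbove_zero, tridiag_submatrix_succ,
    Fin.succ_zero_eq_one, hminor]
  · simp [T, tridiag]
    ring
  · simp [T, tridiag]

theorem sum_tridiag_row_mul (a b c : R) {n : ℕ} (f : ℕ → R) (r : Fin n) :
    ∑ j : Fin n, tridiag n a b c r j * f j =
      a * f r + (if (r : ℕ) + 1 < n then b * f (r + 1) else 0)
        + (if 1 ≤ (r : ℕ) then c * f (r - 1) else 0) := by
  have hterm : ∀ j : ℕ, (if (r : ℕ) = j then a else if (r : ℕ) + 1 = j then b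
      else if j + 1 = r then c else 0) * f j =
      (if j = r then a * f r else 0) + (if j = r + 1 then b * f (r + 1) else 0)
        + (if j = r - 1 then (if 1 ≤ (r : ℕ) then c * f (r - 1) else 0) else 0) := by
    intro j
    split_ifs <;> first | omega | (subst_vars; ring1)
  simp only [tridiag, of_apply]
  rw [Fin.sum_univ_eq_sum_range (fun j => (if (r : ℕ) = j then a else if (r : ℕ) + 1 = j then b
      else if j + 1 = r then c else 0) * f j)]
  simp only [hterm, sum_add_distrib, sum_ite_eq', mem_range, r.isLt, if_true]
  split_ifs <;> first | omega | rfl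

def vmatEntry (x y : R) (i r c : ℕ) : R :=
  if c + 1 = i then
    if r + 1 = i then -1 else if r + 2 = i then y else if r = i then x else 0
  else if r = c then 1 else 0

theorem Vmat_eq_of_vmatEntry (x y : R) (m i : ℕ) :
    Vmat x y m i = of fun r c : Fin m => vmatEntry x y i r c := by
  ext r c
  simp only [Vmat, vmatEntry, of_apply, Fin.ext_iff]

theorem sum_mul_vmatEntry_of_ne (x y : R) (f : ℕ → R) {n i c : ℕ} (hc : c < n)
    (hi : c + 1 ≠ i) :
    ∑ j ∈ range n, f j * vmatEntry x y i j c = f c := by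
  simp [vmatEntry, hi, hc]

theorem sum_mul_vmatEntry_self (x y : R) (f : ℕ → R) {n c : ℕ} (hc : c < n) :
    ∑ j ∈ range n, f j * vmatEntry x y (c + 1) j c =
      -f c + (if 1 ≤ c then y * f (c - 1) else 0) + (if c + 1 < n then x * f (c + 1) else 0) := by
  have hterm : ∀ j, f j * vmatEntry x y (c + 1) j c =
      (if j = c then -f c else 0)
        + (if j = c - 1 then (if 1 ≤ c then y * f (c - 1) else 0) else 0)
        + (if j = c + 1 then x * f (c + 1) else 0) := by
    intro j
    simp only [vmatEntry, if_true]
    split_ifs <;> first | omega | (subst_vars; ring1)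
  simp only [hterm, sum_add_distrib, sum_ite_eq', mem_range, hc, if_true]
  split_ifs <;> first | omega | rfl

/-- The `(r, c)` entry of `V_1 ⋯ V_k` (with `y = x`), rows and columns counted from `0`. -/
def prodVmatEntry (x : R) (k r c : ℕ) : R :=
  if c < k then
    if r = 0 then -x ^ c
    else if r = c + 1 then x
    else if r ≤ c then x ^ (c - r + 2) - x ^ (c - r)
    else 0
  else if r = c then 1 else 0

theorem prodVmatEntry_of_lt (x : R) {k r c : ℕ} (h : c < k) :
    prodVmatEntry x k r c =
      if r = 0 then -x ^ c
      else if r = c + 1 then x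
      else if r ≤ c then x ^ (c - r + 2) - x ^ (c - r)
      else 0 :=
  if_pos h

theorem prodVmatEntry_of_le (x : R) {k r c : ℕ} (h : k ≤ c) :
    prodVmatEntry x k r c = if r = c then 1 else 0 :=
  if_neg h.not_gt

theorem sum_prodVmatEntry_mul_vmatEntry (x : R) {n k r c : ℕ} (hr : r < n) (hc : c < n) :
    ∑ j ∈ range n, prodVmatEntry x k r j * vmatEntry x x (k + 1) j c =
      prodVmatEntry x (k + 1) r c := by
  rcases eq_or_ne c k with rfl | hck
  · rw [sum_mul_vmatEntry_self x x _ hc, prodVmatEntry_of_le x le_rfl,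
      prodVmatEntry_of_le x (Nat.le_succ c), prodVmatEntry_of_lt x (Nat.lt_succ_self c)]
    rcases c with _ | d
    · split_ifs <;> first | omega | ring1
    · rw [add_tsub_cancel_right, prodVmatEntry_of_lt x (Nat.lt_succ_self d)]
      split_ifs <;> first
        | omega
        | ring1
        | (subst_vars; rw [Nat.sub_self]; ring1)
        | (rw [Nat.sub_add_comm (by omega : r ≤ d)]; ring1)
  · rw [sum_mul_vmatEntry_of_ne x x _ hc (by omega)]
    simp only [prodVmatEntry]
    split_ifs <;> first | rfl | omega

theorem prod_ofFn_Vmat (x : R) {n k : ℕ} (hk : k ≤ n) :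
    (List.ofFn fun i : Fin k => Vmat x x n (i + 1)).prod =
      of fun r c : Fin n => prodVmatEntry x k r c := by
  induction k with
  | zero =>
    ext r c
    simp [prodVmatEntry, one_apply, Fin.ext_iff]
  | succ k ih =>
    ext r c
    simp only [List.ofFn_succ', List.prod_concat, Fin.val_castSucc, Fin.val_last]
    rw [ih (by omega), Vmat_eq_of_vmatEntry, mul_apply]
    simp only [of_apply]
    rw [Fin.sum_univ_eq_sum_range (fun j => prodVmatEntry x k r j * vmatEntry x x (k + 1) j c)]
    exact sum_prodVmatEntry_mul_vmatEntry x r.isLt c.isLt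

def upperPowMatrix (n : ℕ) (x : R) : Matrix (Fin n) (Fin n) R :=
  of fun r c => if (r : ℕ) ≤ c then x ^ ((c : ℕ) - r) else 0

theorem det_upperPowMatrix (n : ℕ) (x : R) : (upperPowMatrix n x).det = 1 := by
  rw [det_of_isUpperTriangular]
  · simp [upperPowMatrix]
  · intro i j hij
    simp [upperPowMatrix, not_le.mpr (show j < i from hij)]

theorem tridiag_mul_upperPowMatrix (n : ℕ) (x : R) :
    tridiag n (-2) x x * upperPowMatrix n x =
      (of fun r c : Fin n => prodVmatEntry x n r c) - 1 := by
  ext ⟨r, hr⟩ ⟨c, hc⟩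
  rw [mul_apply, Matrix.sub_apply, one_apply]
  simp only [upperPowMatrix, of_apply]
  rw [sum_tridiag_row_mul _ _ _ (fun j => if j ≤ c then x ^ (c - j) else 0),
    prodVmatEntry_of_lt x hc]
  simp only [Fin.mk.injEq]
  rcases Nat.lt_or_ge c r with hcr | hrc
  · split_ifs <;> first
      | omega
      | (subst_vars; simp)
  · obtain ⟨d, rfl⟩ := Nat.exists_eq_add_of_le hrc
    rcases r with _ | s <;> rcases d with _ | e
    all_goals
      simp (disch := omega) [show ∀ a b : ℕ, a + b - (a + 1) = b - 1 by omega,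
        show ∀ a b : ℕ, a + 1 + b - a = b + 1 by omega, if_pos, if_neg]
      ring

theorem det_prod_ofFn_Vmat_sub_one (x : R) (n : ℕ) :
    ((List.ofFn fun i : Fin n => Vmat x x n ((i : ℕ) + 1)).prod - 1).det =
      (tridiag n (-2) x x).det := by
  rw [prod_ofFn_Vmat x le_rfl, ← tridiag_mul_upperPowMatrix, det_mul, det_upperPowMatrix, mul_one]

end

theorem Ppoly_eq_det_tridiag (n : ℕ) : Ppoly n = (tridiag n (-2) X X).det := by
  cases n with
  | zero => simp [Ppoly]
  | succ n => exact det_prod_ofFn_Vmat_sub_one X (n + 1)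

/-- Proposition 4.2: for `n ≥ 2`, `P_n(x) = −2 P_{n−1}(x) − x² P_{n−2}(x)`. -/
theorem stmt5 (n : ℕ) (hn : 2 ≤ n) :
    Ppoly n = -2 * Ppoly (n-1) - (Polynomial.X : Polynomial ℤ)^2 * Ppoly (n-2) := by
  obtain ⟨m, rfl⟩ := Nat.exists_eq_add_of_le' hn
  simp only [Nat.add_sub_cancel, show m + 2 - 1 = m + 1 by omega, Ppoly_eq_det_tridiag,
    det_tridiag_succ_succ]
  ring
end

section
/- The matrix ψ_{n+1}(t_1 t_2 ⋯ t_n) equals the n×n matrix A_n with entries a_{1,j} = −y^{j−1} for all j; a_{i,j} = 0 for i < j−1 and i > 1; a_{j+1,j} = x for 1 ≤ j ≤ n−1; and a_{i,j} = y^{j−i}(xy−1) for 1 < j ≤ i. -/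
open Matrix Polynomial

/-- The product `V_1 V_2 ⋯ V_n` over `ℤ[x,y]`, i.e. `ψ_{n+1}(t_1 t_2 ⋯ t_n)`. -/
noncomputable def psiWordXY (n : ℕ) : Matrix (Fin n) (Fin n) Lam :=
  (List.ofFn fun i : Fin n => Vmat xP yP n ((i : ℕ) + 1)).prod

/-- The matrix `A_n` (in 1-based indices `i,j`): `a_{1,j} = −y^{j−1}`;
`a_{j+1,j} = x`; `a_{i,j} = y^{j−i}(xy−1)` for `1 < i ≤ j`; `a_{i,j} = 0`
otherwise. -/
noncomputable def Amat (n : ℕ) : Matrix (Fin n) (Fin n) Lam :=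
  Matrix.of fun r c =>
    if (r : ℕ) = 0 then -(yP ^ (c : ℕ))
    else if (r : ℕ) = (c : ℕ) + 1 then xP
    else if (r : ℕ) ≤ (c : ℕ) then yP ^ ((c : ℕ) - (r : ℕ)) * (xP * yP - 1)
    else 0

/-!
Right multiplication by `V_{k+1}` only changes column `k` (0-based), replacing it by
`y · (column k-1) - (column k) + x · (column k+1)`. In `V_1 ⋯ V_k` the columns `k` and `k+1`
are still those of the identity, and the entries of `A_n` satisfy exactly this recurrence
in the column index, so by induction `V_1 ⋯ V_k` is `A_n` in its first `k` columns and the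
identity in the others.
-/

section

variable {R : Type*} [CommRing R] (x y : R)

theorem Fin.sum_ite_val_eq {M : Type*} [AddCommMonoid M] {m : ℕ} (t : ℕ) (f : ℕ → M) :
    (∑ j : Fin m, if (j : ℕ) = t then f j else 0) = if t < m then f t else 0 := by
  split_ifs with h
  · convert Fintype.sum_ite_eq' (⟨t, h⟩ : Fin m) (fun j => f j) using 2 with j
    simp [Fin.ext_iff]
  · exact Finset.sum_eq_zero fun j _ => if_neg (by omega)

theorem mul_Vmat_apply_of_ne {m i : ℕ} (M : Matrix (Fin m) (Fin m) R) (r c : Fin m)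
    (hc : (c : ℕ) + 1 ≠ i) : (M * Vmat x y m i) r c = M r c := by
  simp [Matrix.mul_apply, Vmat, hc]

theorem mul_Vmat_apply_self {m : ℕ} (M : Matrix (Fin m) (Fin m) R) (r c : Fin m) :
    (M * Vmat x y m (c + 1)) r c =
      y * (∑ j : Fin m, if (j : ℕ) + 1 = c then M r j else 0) - M r c
        + x * (∑ j : Fin m, if (j : ℕ) = c + 1 then M r j else 0) := by
  have hdiag : M r c = ∑ j : Fin m, if j = c then M r j else 0 := by simp
  rw [hdiag, Matrix.mul_apply, Finset.mul_sum, Finset.mul_sum, sub_eq_add_neg,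
    ← Finset.sum_neg_distrib, ← Finset.sum_add_distrib, ← Finset.sum_add_distrib]
  refine Finset.sum_congr rfl fun j _ => ?_
  simp only [Vmat, of_apply, if_true, Fin.ext_iff]
  split_ifs <;> first | ring1 | (exfalso; omega)

/-- The entries of `A_n`, 0-based, over any commutative ring. -/
def aEntry (r c : ℕ) : R :=
  if r = 0 then -(y ^ c)
  else if r = c + 1 then x
  else if r ≤ c then y ^ (c - r) * (x * y - 1)
  else 0

theorem aEntry_zero_right (r : ℕ) :
    aEntry x y r 0 = -(if r = 0 then 1 else 0) + x * (if r = 1 then 1 else 0) := by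
  unfold aEntry
  split_ifs <;> first | ring1 | (exfalso; omega)

theorem aEntry_succ_right (r k : ℕ) :
    aEntry x y r (k + 1) =
      y * aEntry x y r k - (if r = k + 1 then 1 else 0) + x * (if r = k + 2 then 1 else 0) := by
  unfold aEntry
  split_ifs <;> first
    | ring1
    | (exfalso; omega)
    | (rw [show k + 1 - r = 0 by omega]; ring1)
    | (rw [show k + 1 - r = k - r + 1 by omega]; ring1)

def prefixEntry (k r c : ℕ) : R :=
  if c < k then aEntry x y r c else if r = c then 1 else 0

def prefixProd (n k : ℕ) : Matrix (Fin n) (Fin n) R :=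
  (List.ofFn fun i : Fin k => Vmat x y n ((i : ℕ) + 1)).prod

theorem prefixProd_succ (n k : ℕ) :
    prefixProd x y n (k + 1) = prefixProd x y n k * Vmat x y n (k + 1) := by
  rw [prefixProd, List.ofFn_succ', List.prod_concat]
  rfl

theorem prefixProd_apply (n k : ℕ) (r c : Fin n) :
    prefixProd x y n k r c = prefixEntry x y k r c := by
  induction k generalizing r c with
  | zero => simp [prefixProd, prefixEntry, Matrix.one_apply, Fin.ext_iff]
  | succ k ih =>
    rw [prefixProd_succ]
    by_cases hc : (c : ℕ) = k
    · subst hc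
      rw [mul_Vmat_apply_self]
      simp only [ih]
      have hnext : (∑ j : Fin n, if (j : ℕ) = c + 1 then prefixEntry x y c r j else 0) =
          if (r : ℕ) = c + 1 then 1 else 0 := by
        rw [Fin.sum_ite_val_eq]
        unfold prefixEntry
        split_ifs <;> first | rfl | (exfalso; omega)
      have hcol : prefixEntry x y (c + 1) r c = aEntry x y r c := if_pos (Nat.lt_succ_self _)
      have hdiag : prefixEntry x y c r c = if (r : ℕ) = c then 1 else 0 := by
        simp [prefixEntry]
      rw [hnext, hcol, hdiag]
      obtain ⟨_ | k, hk⟩ := c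
      · dsimp only
        rw [Finset.sum_eq_zero fun j _ => if_neg (Nat.succ_ne_zero _), aEntry_zero_right]
        ring
      · dsimp only
        simp only [Nat.add_right_cancel_iff]
        rw [Fin.sum_ite_val_eq, if_pos (by omega), prefixEntry, if_pos (Nat.lt_succ_self k),
          aEntry_succ_right]
    · rw [mul_Vmat_apply_of_ne _ _ _ _ _ (by omega), ih]
      unfold prefixEntry
      split_ifs <;> first | rfl | (exfalso; omega)

end

/-- Lemma 3.4(a): `ψ_{n+1}(t_1 t_2 ⋯ t_n) = A_n`. -/
theorem stmt8 (n : ℕ) : psiWordXY n = Amat n := by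
  refine Matrix.ext fun r c => ?_
  change prefixProd xP yP n n r c = aEntry xP yP r c
  rw [prefixProd_apply]
  exact if_pos c.isLt
end

section
/- For n ≥ 4, β ∈ T_n, and 1 ≤ i ≤ n−2, the functions f_n satisfy the skein relation f_n(β t_i t_{i+1} t_i) − f_n(β t_{i+1} t_i t_{i+1}) = (x² − 1)·(f_n(β t_i) − f_n(β t_{i+1})). -/
open Matrix Polynomial

/-!
Write `V_k = 1 + α_k e_kᵀ` with `α_k` the deformed Tits root. For adjacent generators `c₁, c₂` put
`U = [α_{c₁} α_{c₂}]` and let `E` select the rows `c₁, c₂`; then every word in `V_{c₁}, V_{c₂}` is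
`1 + U C E` for a `2 × 2` coefficient matrix `C`, and coefficients multiply through the Gram matrix
`E U = [[-2, y], [x, -2]]`. The numerator `det (M (1 + U C E) - 1) = det (N + (M U) C E)`,
`N = M - 1`, only changes two columns of `N`, so it equals `det N + ℓ C + det C · K` with `ℓ`
linear. The two braid words have coefficients `[[xy, y], [x, 1]]` and `[[1, y], [x, xy]]`, both of
determinant zero, whose difference is `xy - 1` times that of the coefficients `E₁₁`, `E₂₂` of the
single generators. Hence the skein relation holds for the numerators with `M = ψ β` arbitrary.
-/

section TwoColumns

variable {n R : Type*} [DecidableEq n] [CommRing R]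

lemma add_mul_mul_submatrix_one_eq_updateCol (N : Matrix n n R) {p : Fin 2 → n} (hp : p 0 ≠ p 1)
    (W : Matrix n (Fin 2) R) (C : Matrix (Fin 2) (Fin 2) R) :
    N + W * C * (1 : Matrix n n R).submatrix p id =
      (N.updateCol (p 0) (Nᵀ (p 0) + C 0 0 • Wᵀ 0 + C 1 0 • Wᵀ 1)).updateCol (p 1)
        (Nᵀ (p 1) + C 0 1 • Wᵀ 0 + C 1 1 • Wᵀ 1) := by
  ext r c
  rcases eq_or_ne c (p 1) with rfl | h₁
  · simp [mul_apply, Fin.sum_univ_two, one_apply, hp, mul_comm, add_assoc]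
  rcases eq_or_ne c (p 0) with rfl | h₀
  · simp [mul_apply, Fin.sum_univ_two, one_apply, hp, hp.symm, mul_comm, add_assoc]
  · simp [mul_apply, Fin.sum_univ_two, one_apply, h₀, h₁, h₀.symm, h₁.symm]

variable [Fintype n]

def detUpdateCol₂ (N : Matrix n n R) (c₁ c₂ : n) (a b : n → R) : R :=
  ((N.updateCol c₁ a).updateCol c₂ b).det

variable (N : Matrix n n R) {c₁ c₂ : n}

lemma detUpdateCol₂_add_right (a b b' : n → R) :
    detUpdateCol₂ N c₁ c₂ a (b + b') = detUpdateCol₂ N c₁ c₂ a b + detUpdateCol₂ N c₁ c₂ a b' :=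
  det_updateCol_add _ _ _ _

lemma detUpdateCol₂_smul_right (a : n → R) (s : R) (b : n → R) :
    detUpdateCol₂ N c₁ c₂ a (s • b) = s * detUpdateCol₂ N c₁ c₂ a b :=
  det_updateCol_smul _ _ _ _

lemma detUpdateCol₂_comm (h : c₁ ≠ c₂) (a b : n → R) :
    detUpdateCol₂ N c₁ c₂ a b = ((N.updateCol c₂ b).updateCol c₁ a).det := by
  rw [detUpdateCol₂, updateCol_comm _ h]

lemma detUpdateCol₂_add_left (h : c₁ ≠ c₂) (a a' b : n → R) :
    detUpdateCol₂ N c₁ c₂ (a + a') b = detUpdateCol₂ N c₁ c₂ a b + detUpdateCol₂ N c₁ c₂ a' b := by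
  simp only [detUpdateCol₂_comm N h, det_updateCol_add]

lemma detUpdateCol₂_smul_left (h : c₁ ≠ c₂) (s : R) (a b : n → R) :
    detUpdateCol₂ N c₁ c₂ (s • a) b = s * detUpdateCol₂ N c₁ c₂ a b := by
  simp only [detUpdateCol₂_comm N h, det_updateCol_smul]

lemma detUpdateCol₂_self (h : c₁ ≠ c₂) (a : n → R) : detUpdateCol₂ N c₁ c₂ a a = 0 :=
  det_zero_of_column_eq h fun k => by simp [updateCol_ne h]

lemma detUpdateCol₂_swap (h : c₁ ≠ c₂) (a b : n → R) :
    detUpdateCol₂ N c₁ c₂ b a = -detUpdateCol₂ N c₁ c₂ a b := by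
  have h₀ := detUpdateCol₂_self N h (a + b)
  rw [detUpdateCol₂_add_left N h, detUpdateCol₂_add_right, detUpdateCol₂_add_right,
    detUpdateCol₂_self N h, detUpdateCol₂_self N h] at h₀
  linear_combination h₀

lemma detUpdateCol₂_transpose_eq_det : detUpdateCol₂ N c₁ c₂ (Nᵀ c₁) (Nᵀ c₂) = N.det := by
  show ((N.updateCol c₁ fun r => N r c₁).updateCol c₂ fun r => N r c₂).det = N.det
  rw [updateCol_eq_self, updateCol_eq_self]

lemma det_add_mul_mul_submatrix_one {p : Fin 2 → n} (hp : p 0 ≠ p 1)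
    (W : Matrix n (Fin 2) R) (C : Matrix (Fin 2) (Fin 2) R) :
    det (N + W * C * (1 : Matrix n n R).submatrix p id) =
      N.det + C 0 0 * detUpdateCol₂ N (p 0) (p 1) (Wᵀ 0) (Nᵀ (p 1))
        + C 1 0 * detUpdateCol₂ N (p 0) (p 1) (Wᵀ 1) (Nᵀ (p 1))
        + C 0 1 * detUpdateCol₂ N (p 0) (p 1) (Nᵀ (p 0)) (Wᵀ 0)
        + C 1 1 * detUpdateCol₂ N (p 0) (p 1) (Nᵀ (p 0)) (Wᵀ 1)
        + C.det * detUpdateCol₂ N (p 0) (p 1) (Wᵀ 0) (Wᵀ 1) := by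
  rw [add_mul_mul_submatrix_one_eq_updateCol N hp, ← detUpdateCol₂]
  simp only [detUpdateCol₂_add_left N hp, detUpdateCol₂_add_right, detUpdateCol₂_smul_left N hp,
    detUpdateCol₂_smul_right, detUpdateCol₂_self N hp, detUpdateCol₂_transpose_eq_det,
    detUpdateCol₂_swap N hp (Wᵀ 0) (Wᵀ 1), det_fin_two]
  ring

end TwoColumns

section RankTwoPerturbation

variable {l n R : Type*} [Fintype l] [Fintype n] [DecidableEq n] [CommRing R]

lemma one_add_mul_mul_mul_one_add_mul_mul (U : Matrix n l R) (E : Matrix l n R)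
    (C C' : Matrix l l R) :
    (1 + U * C * E) * (1 + U * C' * E) = 1 + U * (C + C' + C * (E * U) * C') * E := by
  simp only [Matrix.mul_add, Matrix.add_mul, Matrix.mul_one, Matrix.one_mul, Matrix.mul_assoc]
  abel

variable {x y : R} {U : Matrix n (Fin 2) R} {E : Matrix (Fin 2) n R}

lemma one_add_mul_mul_braid_fst (hG : E * U = !![-2, y; x, -2]) :
    (1 + U * !![(1 : R), 0; 0, 0] * E) * (1 + U * !![(0 : R), 0; 0, 1] * E) *
        (1 + U * !![(1 : R), 0; 0, 0] * E) = 1 + U * !![x * y, y; x, 1] * E := by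
  simp only [one_add_mul_mul_mul_one_add_mul_mul, hG]
  congr 3
  ext i j
  fin_cases i <;> fin_cases j <;> norm_num [mul_comm]

lemma one_add_mul_mul_braid_snd (hG : E * U = !![-2, y; x, -2]) :
    (1 + U * !![(0 : R), 0; 0, 1] * E) * (1 + U * !![(1 : R), 0; 0, 0] * E) *
        (1 + U * !![(0 : R), 0; 0, 1] * E) = 1 + U * !![1, y; x, x * y] * E := by
  simp only [one_add_mul_mul_mul_one_add_mul_mul, hG]
  congr 3
  ext i j
  fin_cases i <;> fin_cases j <;> norm_num [mul_comm]

end RankTwoPerturbation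

lemma mul_one_add_sub_one {α : Type*} [Ring α] (a b : α) : a * (1 + b) - 1 = a - 1 + a * b := by
  noncomm_ring

section Tits

variable {R : Type*} [CommRing R] {m : ℕ}

def titsRoot (x y : R) (k : Fin m) : Fin m → R := fun r =>
  if r = k then -2 else if (r : ℕ) + 1 = k then y else if (r : ℕ) = k + 1 then x else 0

lemma Vmat_succ_eq_one_add_vecMulVec (x y : R) (k : Fin m) :
    Vmat x y m (k + 1) = 1 + vecMulVec (titsRoot x y k) (Pi.single k 1) := by
  ext r c
  simp only [Vmat, titsRoot, of_apply, Matrix.add_apply, one_apply, vecMulVec_apply,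
    Pi.single_apply, Nat.add_right_cancel_iff, Fin.val_eq_val, mul_ite, mul_one, mul_zero]
  split_ifs <;> first | omega | norm_num

def titsRootMatrix (x y : R) (c₁ c₂ : Fin m) : Matrix (Fin m) (Fin 2) R :=
  of fun r j => titsRoot x y (![c₁, c₂] j) r

lemma Vmat_fst_eq_one_add_titsRootMatrix (x y : R) (c₁ c₂ : Fin m) :
    Vmat x y m (c₁ + 1) = 1 + titsRootMatrix x y c₁ c₂ * !![(1 : R), 0; 0, 0] *
      (1 : Matrix (Fin m) (Fin m) R).submatrix ![c₁, c₂] id := by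
  ext r c
  simp only [Vmat_succ_eq_one_add_vecMulVec, Matrix.add_apply, mul_apply, submatrix_apply,
    Fin.sum_univ_two]
  simp [titsRootMatrix, one_apply, vecMulVec_apply, Pi.single_apply, eq_comm (a := c₁)]

lemma Vmat_snd_eq_one_add_titsRootMatrix (x y : R) (c₁ c₂ : Fin m) :
    Vmat x y m (c₂ + 1) = 1 + titsRootMatrix x y c₁ c₂ * !![(0 : R), 0; 0, 1] *
      (1 : Matrix (Fin m) (Fin m) R).submatrix ![c₁, c₂] id := by
  ext r c
  simp only [Vmat_succ_eq_one_add_vecMulVec, Matrix.add_apply, mul_apply, submatrix_apply,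
    Fin.sum_univ_two]
  simp [titsRootMatrix, one_apply, vecMulVec_apply, Pi.single_apply, eq_comm (a := c₂)]

lemma submatrix_one_mul_titsRootMatrix (x y : R) {c₁ c₂ : Fin m} (h : (c₂ : ℕ) = c₁ + 1) :
    (1 : Matrix (Fin m) (Fin m) R).submatrix ![c₁, c₂] id * titsRootMatrix x y c₁ c₂ =
      !![-2, y; x, -2] := by
  rw [← submatrix_id_id (titsRootMatrix x y c₁ c₂),
    ← submatrix_mul _ _ _ _ _ Function.bijective_id, Matrix.one_mul]
  have hc : c₁ ≠ c₂ := Fin.ne_of_val_ne (by omega)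
  ext i j
  fin_cases i <;> fin_cases j <;>
    simp [titsRootMatrix, titsRoot, h, hc, hc.symm, show (c₁ : ℕ) + 1 + 1 ≠ c₁ by omega]

lemma det_mul_Vmat_braid_sub {c₁ c₂ : Fin m} (h : (c₂ : ℕ) = c₁ + 1) (x y : R)
    (M : Matrix (Fin m) (Fin m) R) :
    det (M * (Vmat x y m (c₁ + 1) * Vmat x y m (c₂ + 1) * Vmat x y m (c₁ + 1)) - 1)
      - det (M * (Vmat x y m (c₂ + 1) * Vmat x y m (c₁ + 1) * Vmat x y m (c₂ + 1)) - 1) =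
      (x * y - 1) * (det (M * Vmat x y m (c₁ + 1) - 1) - det (M * Vmat x y m (c₂ + 1) - 1)) := by
  have hc : c₁ ≠ c₂ := Fin.ne_of_val_ne (by omega)
  have hG := submatrix_one_mul_titsRootMatrix x y h
  rw [Vmat_fst_eq_one_add_titsRootMatrix x y c₁ c₂, Vmat_snd_eq_one_add_titsRootMatrix x y c₁ c₂,
    one_add_mul_mul_braid_fst hG, one_add_mul_mul_braid_snd hG]
  simp only [mul_one_add_sub_one, ← Matrix.mul_assoc,
    det_add_mul_mul_submatrix_one (M - 1) (p := ![c₁, c₂]) hc, det_fin_two, of_apply, cons_val',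
    cons_val_zero, cons_val_one, cons_val_fin_one]
  ring

end Tits

/-- Proposition 4.11 (skein relation): for `n ≥ 4` (`n = m+1`), `β ∈ T_n` and
`1 ≤ i ≤ n−2`,
`f_n(β t_i t_{i+1} t_i) − f_n(β t_{i+1} t_i t_{i+1}) = (x²−1)(f_n(β t_i) − f_n(β t_{i+1}))`. -/
theorem stmt17 (m : ℕ) (i : ℕ) (hi1 : 1 ≤ i) (hi2 : i ≤ m - 1)
    (ψ : TwinGroup m →* Matrix (Fin m) (Fin m) Zx)
    (hψ : ∀ k : Fin m, ψ (TwinGroup.of k) = Vmat xx xx m ((k : ℕ) + 1))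
    (β : TwinGroup m) :
    Matrix.det (ψ (β * TwinGroup.of (⟨i - 1, by omega⟩ : Fin m)
          * TwinGroup.of (⟨i, by omega⟩ : Fin m)
          * TwinGroup.of (⟨i - 1, by omega⟩ : Fin m)) - 1) / ((-xx)^m * Ux m)
      - Matrix.det (ψ (β * TwinGroup.of (⟨i, by omega⟩ : Fin m)
          * TwinGroup.of (⟨i - 1, by omega⟩ : Fin m)
          * TwinGroup.of (⟨i, by omega⟩ : Fin m)) - 1) / ((-xx)^m * Ux m)
    = (xx^2 - 1) *
      (Matrix.det (ψ (β * TwinGroup.of (⟨i - 1, by omega⟩ : Fin m)) - 1) / ((-xx)^m * Ux m)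
        - Matrix.det (ψ (β * TwinGroup.of (⟨i, by omega⟩ : Fin m)) - 1) / ((-xx)^m * Ux m)) := by
  set c₁ : Fin m := ⟨i - 1, by omega⟩
  set c₂ : Fin m := ⟨i, by omega⟩
  have h : (c₂ : ℕ) = c₁ + 1 := by simp only [c₁, c₂]; omega
  have braid := det_mul_Vmat_braid_sub h xx xx (ψ β)
  simp only [map_mul, hψ, ← sq, mul_assoc] at braid ⊢
  rw [div_sub_div_same, div_sub_div_same, braid, mul_div_assoc]
end
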